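/- Suppose assumptions (A1) and (A2) hold. Then there exists a constant C > 0, depending only on γ, α, the constants C1, C2, C3, C̃1, C̃2, C̃3 of (A1)–(A2), and on sup|V|, such that for every 0 < ε ≤ 1 and every solution (u, m) of Problem 1, one has ∫₀¹ m dx ≤ C. -/

import Mathlib

/-!
Let `Ψ = ε m' - u'` (`hjFlux`) and `Φ = u m' - m u' + u H'(u') m + ε (m m' + u u')` (`dualityFlux`).
The first equation says `Ψ' = m^α + ε m - u - H(u') - V`, and `m · (first) - u · (second)` says
`Φ' = m^{α+1} + m (u' H'(u') - H(u')) - m V - u + ε (m² + m'² + u² + u'²)`.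
In `Φ' - Ψ'` the terms `u` cancel, and the lower bounds `H ≥ -C1`, `p H'(p) - H(p) ≥ -C̃1`,
`V ≥ -KV`, `m V ≤ KV m`, `ε m ≤ m` give pointwise `m^{α+1} - m^α - K m ≤ C1 + KV + (Φ - Ψ)'`
with `K = 1 + C̃1 + KV`. As `t^{α+1}` dominates `t^α + (K + 1) t` up to a constant, this becomes
`m ≤ const + (Φ - Ψ)'`, and integrating over a period kills the derivative of the periodic `Φ - Ψ`.
-/
open Set intervalIntegral

noncomputable section

/-- `f : ℝ → ℝ` is ½-Hölder continuous: there is `K ≥ 0` with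
`|f x - f y| ≤ K * |x - y| ^ (1/2)` for all `x y`. -/
def IsHolderHalf (f : ℝ → ℝ) : Prop :=
  ∃ K : ℝ, 0 ≤ K ∧ ∀ x y : ℝ, |f x - f y| ≤ K * |x - y| ^ ((1 : ℝ) / 2)

/-- `f` is a 1-periodic function of class `C²` (a `C²` function on the torus `𝕋`). -/
def MemC2T (f : ℝ → ℝ) : Prop :=
  Function.Periodic f 1 ∧ ContDiff ℝ 2 f

/-- `f ∈ C^{2,1/2}(𝕋)`: 1-periodic, of class `C²`, with ½-Hölder continuous
second derivative. -/
def MemC2HalfT (f : ℝ → ℝ) : Prop :=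
  MemC2T f ∧ IsHolderHalf (deriv (deriv f))

/-- `(u, m)` is a solution of Problem 1 with Hamiltonian `H`, potential `V`,
exponent `α` and parameter `ε`: `u, m` are 1-periodic `C²` functions, `m > 0`
everywhere, and the system
`u - u'' + H(u') + V = m^α + ε (m - m'')`,
`m - m'' - (H'(u') m)' = 1 - ε (u - u'')`
holds pointwise. -/
def SolvesMFG (H V : ℝ → ℝ) (α ε : ℝ) (u m : ℝ → ℝ) : Prop :=
  MemC2T u ∧ MemC2T m ∧ (∀ x, 0 < m x) ∧
  (∀ x : ℝ, u x - deriv (deriv u) x + H (deriv u x) + V x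
      = m x ^ α + ε * (m x - deriv (deriv m) x)) ∧
  (∀ x : ℝ, m x - deriv (deriv m) x
      - deriv (fun y => deriv H (deriv u y) * m y) x
      = 1 - ε * (u x - deriv (deriv u) x))

open MeasureTheory Function

theorem Function.Periodic.deriv {f : ℝ → ℝ} {c : ℝ} (hf : Periodic f c) :
    Periodic (deriv f) c := fun x => by
  rw [← deriv_comp_add_const, show (fun y => f (y + c)) = f from funext hf]

theorem integral_le_mul_of_le_const_add_deriv {f Φ φ : ℝ → ℝ} {c T : ℝ} (hT : 0 ≤ T)
    (hf : IntegrableOn f (Icc 0 T)) (hΦ : ∀ x, HasDerivAt Φ (φ x) x) (hper : Periodic Φ T)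
    (hle : ∀ x, f x ≤ c + φ x) :
    ∫ x in 0..T, f x ≤ c * T := by
  have hlin : ∀ x, HasDerivAt (fun x => c * x + Φ x) (c + φ x) x := fun x => by
    simpa using ((hasDerivAt_id' x).const_mul c).fun_add (hΦ x)
  have key := integral_le_sub_of_hasDeriv_right_of_le hT
    (fun x _ => (hlin x).continuousAt.continuousWithinAt) (fun x _ => (hlin x).hasDerivWithinAt)
    hf (fun x _ => hle x)
  have hΦT : Φ T = Φ 0 := by simpa using hper 0
  simpa [hΦT] using key

theorem Real.rpow_le_mul_rpow_add_add {t δ β κ : ℝ} (ht : 0 < t) (hδ : 0 < δ) (hβ : 0 < β)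
    (hκ : 0 < κ) : t ^ β ≤ δ * t ^ (β + κ) + δ ^ (-(β / κ)) := by
  rcases le_or_gt 1 (δ * t ^ κ) with hlarge | hsmall
  · have := mul_le_mul_of_nonneg_left hlarge (Real.rpow_nonneg ht.le β)
    rw [Real.rpow_add ht]
    nlinarith [Real.rpow_nonneg hδ.le (-(β / κ))]
  · have hle : t ^ κ ≤ 1 / δ := (le_div_iff₀' hδ).mpr hsmall.le
    calc t ^ β = (t ^ κ) ^ (β / κ) := by rw [← Real.rpow_mul ht.le, mul_div_cancel₀ _ hκ.ne']
      _ ≤ (1 / δ) ^ (β / κ) := Real.rpow_le_rpow (Real.rpow_nonneg ht.le κ) hle (by positivity)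
      _ = δ ^ (-(β / κ)) := by rw [one_div, Real.inv_rpow hδ.le, Real.rpow_neg hδ.le]
      _ ≤ _ := le_add_of_nonneg_left (by positivity)

theorem exists_le_rpow_add_one_sub {α : ℝ} (hα : 0 < α) (K : ℝ) :
    ∃ B, ∀ t > 0, t ≤ t ^ (α + 1) - t ^ α - K * t + B := by
  set L := |K| + 1
  set δ := (2 * (1 + L))⁻¹
  have hL : 0 ≤ L := by positivity
  have hδ : 0 < δ := by positivity
  have hδL : δ * (1 + L) = 1 / 2 := by simp only [δ]; field_simp
  refine ⟨δ ^ (-(α / 1)) + L * δ ^ (-(1 / α)), fun t ht => ?_⟩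
  have hpow := Real.rpow_le_mul_rpow_add_add ht hδ hα one_pos
  have hone := Real.rpow_le_mul_rpow_add_add ht hδ one_pos hα
  rw [Real.rpow_one, add_comm 1 α] at hone
  nlinarith [mul_le_mul_of_nonneg_left hone hL, Real.rpow_nonneg ht.le (α + 1), le_abs_self K]

theorem hasDerivAt_of_contDiff_two {f : ℝ → ℝ} (hf : ContDiff ℝ 2 f) (x : ℝ) :
    HasDerivAt f (deriv f x) x :=
  (hf.differentiable two_ne_zero x).hasDerivAt

theorem hasDerivAt_deriv_of_contDiff_two {f : ℝ → ℝ} (hf : ContDiff ℝ 2 f) (x : ℝ) :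
    HasDerivAt (deriv f) (deriv (deriv f) x) x :=
  (hf.differentiable_deriv_two x).hasDerivAt

def hjFlux (ε : ℝ) (u m : ℝ → ℝ) (x : ℝ) : ℝ := ε * deriv m x - deriv u x

def dualityFlux (H : ℝ → ℝ) (ε : ℝ) (u m : ℝ → ℝ) (x : ℝ) : ℝ :=
  u x * deriv m x - m x * deriv u x + u x * (deriv H (deriv u x) * m x)
    + ε * (m x * deriv m x + u x * deriv u x)

section Flux

variable {H V : ℝ → ℝ} {α ε c : ℝ} {u m : ℝ → ℝ}

theorem periodic_hjFlux (hu : Periodic u c) (hm : Periodic m c) :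
    Periodic (hjFlux ε u m) c := fun x => by
  simp only [hjFlux, hu.deriv x, hm.deriv x]

theorem periodic_dualityFlux (hu : Periodic u c) (hm : Periodic m c) :
    Periodic (dualityFlux H ε u m) c := fun x => by
  simp only [dualityFlux, hu x, hm x, hu.deriv x, hm.deriv x]

theorem SolvesMFG.hasDerivAt_hjFlux (h : SolvesMFG H V α ε u m) (x : ℝ) :
    HasDerivAt (hjFlux ε u m) (m x ^ α + ε * m x - u x - H (deriv u x) - V x) x := by
  obtain ⟨⟨-, hu⟩, ⟨-, hm⟩, -, hHJ, -⟩ := h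
  refine (((hasDerivAt_deriv_of_contDiff_two hm x).const_mul ε).fun_sub
    (hasDerivAt_deriv_of_contDiff_two hu x)).congr_deriv ?_
  linarith [hHJ x]

theorem SolvesMFG.hasDerivAt_dualityFlux (hH : ContDiff ℝ 2 H) (h : SolvesMFG H V α ε u m)
    (x : ℝ) :
    HasDerivAt (dualityFlux H ε u m)
      (m x ^ (α + 1) + m x * (deriv u x * deriv H (deriv u x) - H (deriv u x)) - m x * V x
        - u x + ε * (m x ^ 2 + deriv m x ^ 2 + u x ^ 2 + deriv u x ^ 2)) x := by
  obtain ⟨⟨-, hu⟩, ⟨-, hm⟩, hpos, hHJ, hFP⟩ := h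
  have hflow : Differentiable ℝ (fun y => deriv H (deriv u y) * m y) :=
    (hH.differentiable_deriv_two.comp hu.differentiable_deriv_two).mul
      (hm.differentiable two_ne_zero)
  have u₀ := hasDerivAt_of_contDiff_two hu x
  have u₁ := hasDerivAt_deriv_of_contDiff_two hu x
  have m₀ := hasDerivAt_of_contDiff_two hm x
  have m₁ := hasDerivAt_deriv_of_contDiff_two hm x
  refine ((((u₀.fun_mul m₁).fun_sub (m₀.fun_mul u₁)).fun_add
    (u₀.fun_mul (hflow x).hasDerivAt)).fun_add
    (((m₀.fun_mul m₁).fun_add (u₀.fun_mul u₁)).const_mul ε)).congr_deriv ?_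
  rw [Real.rpow_add_one (hpos x).ne']
  linear_combination m x * hHJ x - u x * hFP x

theorem SolvesMFG.rpow_add_one_sub_le (hH : ContDiff ℝ 2 H) (h : SolvesMFG H V α ε u m)
    {C1 tC1 KV : ℝ} (hH_ge : ∀ p, -C1 ≤ H p) (hLag_ge : ∀ p, -tC1 ≤ p * deriv H p - H p)
    (hV : ∀ x, |V x| ≤ KV) (hε : 0 ≤ ε) (hε1 : ε ≤ 1) (x : ℝ) :
    m x ^ (α + 1) - m x ^ α - (1 + tC1 + KV) * m x
      ≤ C1 + KV + deriv (dualityFlux H ε u m - hjFlux ε u m) x := by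
  rw [((h.hasDerivAt_dualityFlux hH x).sub (h.hasDerivAt_hjFlux x)).deriv]
  have hm : 0 ≤ m x := (h.2.2.1 x).le
  obtain ⟨hV_ge, hV_le⟩ := abs_le.mp (hV x)
  nlinarith [mul_le_mul_of_nonneg_left (hLag_ge (deriv u x)) hm,
    mul_le_mul_of_nonneg_left hV_le hm, mul_le_mul_of_nonneg_right hε1 hm, hH_ge (deriv u x),
    mul_nonneg hε (by positivity : 0 ≤ m x ^ 2 + deriv m x ^ 2 + u x ^ 2 + deriv u x ^ 2)]

end Flux

theorem mass_bound
    (α γ C1 C2 C3 tC1 tC2 tC3 KV : ℝ)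
    (hα : 0 < α)
    (hC2 : 0 < C2)
    (htC2 : 0 < tC2) :
    ∃ C > 0, ∀ H V : ℝ → ℝ, ContDiff ℝ 2 H → Continuous V →
      Function.Periodic V 1 → (∀ x, |V x| ≤ KV) →
      (∀ p : ℝ, -C1 + C2 * |p| ^ γ ≤ H p ∧ H p ≤ C1 + C3 * |p| ^ γ) →
      (∀ p : ℝ, -tC1 + tC2 * |p| ^ γ ≤ p * deriv H p - H p ∧
          p * deriv H p - H p ≤ tC1 + tC3 * |p| ^ γ) →
      ∀ ε : ℝ, 0 < ε → ε ≤ 1 → ∀ u m : ℝ → ℝ, SolvesMFG H V α ε u m →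
        (∫ x in (0:ℝ)..1, m x) ≤ C := by
  obtain ⟨B, hB⟩ := exists_le_rpow_add_one_sub hα (1 + tC1 + KV)
  refine ⟨max (C1 + KV + B) 1, lt_max_of_lt_right one_pos, ?_⟩
  intro H V hH _ _ hV hA1 hA2 ε hε hε1 u m h
  obtain ⟨⟨hu_per, -⟩, ⟨hm_per, hm⟩, hm_pos, -⟩ := id h
  have hH_ge : ∀ p, -C1 ≤ H p := fun p => by
    nlinarith [(hA1 p).1, Real.rpow_nonneg (abs_nonneg p) γ]
  have hLag_ge : ∀ p, -tC1 ≤ p * deriv H p - H p := fun p => by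
    nlinarith [(hA2 p).1, Real.rpow_nonneg (abs_nonneg p) γ]
  have hΦ : ∀ x, HasDerivAt (dualityFlux H ε u m - hjFlux ε u m)
      (deriv (dualityFlux H ε u m - hjFlux ε u m) x) x := fun x =>
    ((h.hasDerivAt_dualityFlux hH x).sub (h.hasDerivAt_hjFlux x)).differentiableAt.hasDerivAt
  calc ∫ x in (0:ℝ)..1, m x ≤ (C1 + KV + B) * 1 :=
        integral_le_mul_of_le_const_add_deriv zero_le_one hm.continuous.integrableOn_Icc hΦ
          ((periodic_dualityFlux hu_per hm_per).sub (periodic_hjFlux hu_per hm_per)) fun x => by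
            linarith [hB (m x) (hm_pos x),
              h.rpow_add_one_sub_le hH hH_ge hLag_ge hV hε.le hε1 x]
    _ ≤ max (C1 + KV + B) 1 := by simp
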